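/- Let X be a bifurcating Markov chain with kernel 𝒫 and initial distribution ν satisfying the uniform geometric ergodicity assumption with 2α² < 1, and let f be a bounded measurable real function on S. Then for all integers n ≥ p ≥ 0 and all δ > 0, with a_α = Σ_{m≥0}(2α²)^m: P( | |𝔾_{n−p}|^{-1} M_{𝔾_{n−p}}(f̃) | > δ ) ≤ 2 exp( − (δ² |𝔾_{n−p}|)/(4 ‖f‖²_∞ M² (1+α)² a_α) · (1 − 2‖f‖_∞ M α^{n−p}/δ) ). -/

import Mathlib

open MeasureTheory Filter ENNReal ProbabilityTheory

namespace BMCMDP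

variable {S : Type*} [MeasurableSpace S] {Ω : Type*} [MeasurableSpace Ω]

/-- The `k`-th generation `𝔾_k` of the regular binary tree, as a finset of words on `{0,1}`. -/
def Gen (k : ℕ) : Finset (List Bool) :=
  Finset.image (fun g : Fin k → Bool => List.ofFn g) Finset.univ

/-- The tree `𝕋_k` up to generation `k`. -/
def TreeUpTo (k : ℕ) : Finset (List Bool) :=
  (Finset.range (k + 1)).biUnion Gen

/-- `i𝔾_r = {ij : j ∈ 𝔾_r}`. -/
def subGen (i : List Bool) (r : ℕ) : Finset (List Bool) :=
  (Gen r).image (fun j => i ++ j)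

/-- `M_A(f) = ∑_{u ∈ A} f(X_u)`. -/
def Mfun (X : List Bool → Ω → S) (A : Finset (List Bool)) (f : S → ℝ) (ω : Ω) : ℝ :=
  ∑ u ∈ A, f (X u ω)

/-- The kernel `Pk` applied to a function on `S³`: `(Pkg)(x) = ∫ g(x,y,z) Pk(x,dy,dz)`. -/
noncomputable def P3 (Pk : Kernel S (S × S)) (g : S × S × S → ℝ) (x : S) : ℝ :=
  ∫ yz, g (x, yz.1, yz.2) ∂(Pk x)

/-- The kernel `Pk` applied to a function on `S²`: `(Pkg)(x) = ∫ g(y,z) Pk(x,dy,dz)`. -/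
noncomputable def P2 (Pk : Kernel S (S × S)) (g : S × S → ℝ) (x : S) : ℝ :=
  ∫ yz, g yz ∂(Pk x)

/-- The kernel `Pk` applied to a complex-valued function on `S²`. -/
noncomputable def P2C (Pk : Kernel S (S × S)) (g : S × S → ℂ) (x : S) : ℂ :=
  ∫ yz, g yz ∂(Pk x)

/-- The operator `𝒬 = (Pk₀ + Pk₁)/2` acting on functions. -/
noncomputable def Qop (Pk : Kernel S (S × S)) (f : S → ℝ) : S → ℝ :=
  fun x => ((∫ yz, f yz.1 ∂(Pk x)) + (∫ yz, f yz.2 ∂(Pk x))) / 2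

/-- The iterate `𝒬ⁿ`. -/
noncomputable def Qiter (Pk : Kernel S (S × S)) (n : ℕ) (f : S → ℝ) : S → ℝ :=
  (Qop Pk)^[n] f

/-- `f̃ = f - ⟨μ, f⟩`. -/
noncomputable def tildeF (μ : Measure S) (f : S → ℝ) : S → ℝ :=
  fun x => f x - ∫ y, f y ∂μ

/-- Uniform geometric ergodicity: `|𝒬ⁿf(x) - ⟨μ,f⟩| ≤ M αⁿ ‖f‖_∞` for every bounded
measurable `f` (quantified through any uniform bound `C` of `f`). -/
def UnifErg (Pk : Kernel S (S × S)) (μ : Measure S) (M α : ℝ) : Prop :=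
  ∀ f : S → ℝ, Measurable f → ∀ C : ℝ, (∀ x, |f x| ≤ C) →
    ∀ (n : ℕ) (x : S), |Qiter Pk n f x - ∫ y, f y ∂μ| ≤ M * α ^ n * C

/-- symmetrized tensor product `g ⊗_sym h`. -/
noncomputable def symTens (g h : S → ℝ) : S × S → ℝ :=
  fun yz => (g yz.1 * h yz.2 + h yz.1 * g yz.2) / 2

/-- symmetrized tensor product of complex-valued functions. -/
noncomputable def symTensC (g h : S → ℂ) : S × S → ℂ :=
  fun yz => (g yz.1 * h yz.2 + h yz.1 * g yz.2) / 2

/-- the σ-field `σ(X_j ; j ∈ A)`. -/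
def treeSigma (X : List Bool → Ω → S) (A : Finset (List Bool)) : MeasurableSpace Ω :=
  ⨆ j ∈ A, MeasurableSpace.comap (X j) inferInstance

/-- `X = (X_i, i ∈ 𝕋)` is a bifurcating Markov chain with kernel `Pk` and initial
distribution `ν`. -/
structure IsBMC (P : Measure Ω) (Pk : Kernel S (S × S)) (ν : Measure S)
    (X : List Bool → Ω → S) : Prop where
  meas : ∀ i, Measurable (X i)
  init : P.map (X []) = ν
  branching : ∀ (k : ℕ) (g : List Bool → S × S × S → ℝ),
    (∀ i, Measurable (g i)) → (∀ i, ∃ C, ∀ y, |g i y| ≤ C) →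
    condExp (treeSigma X (TreeUpTo k)) P
        (fun ω => ∏ i ∈ Gen k, g i (X i ω, X (i ++ [false]) ω, X (i ++ [true]) ω))
      =ᵐ[P] fun ω => ∏ i ∈ Gen k, P3 Pk (g i) (X i ω)

/-- The lexicographic-type order on the tree: `u ≤ i` iff `u` is an ancestor of `i`, or
`v0` is an ancestor of `u` and `v1` an ancestor of `i` where `v` is the most recent
common ancestor. -/
def treeLE (u i : List Bool) : Prop :=
  u <+: i ∨ ∃ v : List Bool, (v ++ [false]) <+: u ∧ (v ++ [true]) <+: i

/-- The σ-field `ℱ_i = σ(X_u ; u ≤ i)`. -/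
def sigmaLE (X : List Bool → Ω → S) (i : List Bool) : MeasurableSpace Ω :=
  ⨆ u ∈ {u : List Bool | treeLE u i}, MeasurableSpace.comap (X u) inferInstance

/-- `N_{n,i}(𝔣) = |𝔾_n|^{-1/2} ∑_{ℓ=0}^{n-|i|} M_{i𝔾_{n-|i|-ℓ}}(f̃_ℓ)`. -/
noncomputable def Nfun (X : List Bool → Ω → S) (μ : Measure S) (f : ℕ → S → ℝ)
    (n : ℕ) (i : List Bool) (ω : Ω) : ℝ :=
  (Real.sqrt (2 ^ n))⁻¹ *
    ∑ ℓ ∈ Finset.range (n - i.length + 1),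
      Mfun X (subGen i (n - i.length - ℓ)) (tildeF μ (f ℓ)) ω

/-- `Δ_{n,i}(𝔣) = N_{n,i}(𝔣) - E[N_{n,i}(𝔣) | ℱ_i]`. -/
noncomputable def Delta (P : Measure Ω) (X : List Bool → Ω → S) (μ : Measure S)
    (f : ℕ → S → ℝ) (n : ℕ) (i : List Bool) : Ω → ℝ :=
  fun ω => Nfun X μ f n i ω - condExp (sigmaLE X i) P (Nfun X μ f n i) ω

/-- The rate function `I(x) = x²/(2σ)` if `σ ≠ 0`, `I ≡ +∞` if `σ = 0`. -/
noncomputable def mdpRate (sig : ℝ) : ℝ → ℝ≥0∞ := fun x =>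
  if sig = 0 then ⊤ else ENNReal.ofReal (x ^ 2 / (2 * sig))

/-- `(Z_n)` satisfies a moderate deviation principle with speed `b_n²` and rate
function `I` (with the convention `log 0 = -∞`, via `ENNReal.log`). -/
def SatisfiesMDP (P : Measure Ω) (Z : ℕ → Ω → ℝ) (b : ℕ → ℝ) (I : ℝ → ℝ≥0∞) : Prop :=
  ∀ A : Set ℝ, MeasurableSet A →
    (-(⨅ x ∈ interior A, (I x : EReal)) ≤
        Filter.liminf
          (fun n => ((((b n) ^ 2)⁻¹ : ℝ) : EReal) * ENNReal.log (P {ω | Z n ω ∈ A}))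
          Filter.atTop) ∧
      Filter.limsup
          (fun n => ((((b n) ^ 2)⁻¹ : ℝ) : EReal) * ENNReal.log (P {ω | Z n ω ∈ A}))
          Filter.atTop ≤ -(⨅ x ∈ closure A, (I x : EReal))

/-- `Σ₁^sub(𝔣)`. -/
noncomputable def Sigma1Sub (Pk : Kernel S (S × S)) (μ : Measure S) (f : ℕ → S → ℝ) : ℝ :=
  (∑' ℓ : ℕ, (2 : ℝ) ^ (-(ℓ : ℤ)) * ∫ x, (tildeF μ (f ℓ) x) ^ 2 ∂μ) +
    ∑' q : ℕ × ℕ, (2 : ℝ) ^ ((q.2 : ℤ) - (q.1 : ℤ)) *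
      ∫ x, P2 Pk (fun yz =>
        Qiter Pk q.2 (tildeF μ (f q.1)) yz.1 * Qiter Pk q.2 (tildeF μ (f q.1)) yz.2) x ∂μ

/-- `Σ₂^sub(𝔣)` (indices: `q.1 = ℓ`, `q.2.1 = k`, `q.2.2 = r`). -/
noncomputable def Sigma2Sub (Pk : Kernel S (S × S)) (μ : Measure S) (f : ℕ → S → ℝ) : ℝ :=
  (∑' q : ℕ × ℕ, if q.1 < q.2 then
      (2 : ℝ) ^ (-(q.1 : ℤ)) *
        ∫ x, tildeF μ (f q.2) x * Qiter Pk (q.2 - q.1) (tildeF μ (f q.1)) x ∂μ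
    else 0) +
    ∑' q : ℕ × ℕ × ℕ, if q.1 < q.2.1 then
      (2 : ℝ) ^ ((q.2.2 : ℤ) - (q.1 : ℤ)) *
        ∫ x, P2 Pk (symTens (Qiter Pk q.2.2 (tildeF μ (f q.2.1)))
          (Qiter Pk (q.2.1 - q.1 + q.2.2) (tildeF μ (f q.1)))) x ∂μ
    else 0

/-- `Σ^sub(𝔣) = Σ₁^sub(𝔣) + 2Σ₂^sub(𝔣)`. -/
noncomputable def SigmaSub (Pk : Kernel S (S × S)) (μ : Measure S) (f : ℕ → S → ℝ) : ℝ :=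
  Sigma1Sub Pk μ f + 2 * Sigma2Sub Pk μ f

/-- `Σ_𝔾(f)` (sub-critical, single function). -/
noncomputable def SigmaG (Pk : Kernel S (S × S)) (μ : Measure S) (f : S → ℝ) : ℝ :=
  (∫ x, (tildeF μ f x) ^ 2 ∂μ) +
    ∑' k : ℕ, (2 : ℝ) ^ k *
      ∫ x, P2 Pk (fun yz => Qiter Pk k (tildeF μ f) yz.1 * Qiter Pk k (tildeF μ f) yz.2) x ∂μ

/-- `Σ_{𝕋,2}(f)` (sub-critical, single function). -/
noncomputable def SigmaT2 (Pk : Kernel S (S × S)) (μ : Measure S) (f : S → ℝ) : ℝ :=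
  (∑' k : ℕ, if 1 ≤ k then ∫ x, tildeF μ f x * Qiter Pk k (tildeF μ f) x ∂μ else 0) +
    ∑' q : ℕ × ℕ, if 1 ≤ q.1 then
      (2 : ℝ) ^ q.2 *
        ∫ x, P2 Pk (symTens (Qiter Pk q.2 (tildeF μ f))
          (Qiter Pk (q.2 + q.1) (tildeF μ f))) x ∂μ
    else 0

/-- `Σ_𝕋(f) = Σ_𝔾(f) + 2Σ_{𝕋,2}(f)`. -/
noncomputable def SigmaT (Pk : Kernel S (S × S)) (μ : Measure S) (f : S → ℝ) : ℝ :=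
  SigmaG Pk μ f + 2 * SigmaT2 Pk μ f

/-- complexification of a real function. -/
noncomputable def cplx (f : S → ℝ) : S → ℂ := fun x => (f x : ℂ)

/-- `conj(ℛ_j)(f)` for a real function `f`: the complex conjugate of `ℛ_j(f)`. -/
noncomputable def RconjApp {J : Type*} (R : J → (S → ℂ) → S → ℂ) (j : J) (f : S → ℝ) :
    S → ℂ :=
  fun x => (starRingEnd ℂ) (R j (cplx f) x)

/-- The second spectral gap (uniform ergodicity with second spectral gap) assumption. -/
structure SpectralGap (Pk : Kernel S (S × S)) (μ : Measure S) (M α : ℝ)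
    {J : Type*} [Fintype J] (αj : J → ℂ) (R : J → (S → ℂ) → S → ℂ) (β : ℕ → ℝ) :
    Prop where
  J_nonempty : Nonempty J
  distinct : Function.Injective αj
  mod : ∀ j, ‖αj j‖ = α
  lin : ∀ j (a : ℂ) (g h : S → ℂ), R j (a • g + h) = a • R j g + R j h
  nonzero : ∀ j, R j ≠ 0
  idem : ∀ j, R j ∘ R j = R j
  orth : ∀ j j', j ≠ j' → R j ∘ R j' = 0
  beta_nonneg : ∀ n, 0 ≤ β n
  beta_le_one : ∀ n, β n ≤ 1
  beta_anti : Antitone β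
  beta_lim : Tendsto β atTop (nhds 0)
  estimate : ∀ f : S → ℝ, Measurable f → ∀ C : ℝ, (∀ x, |f x| ≤ C) →
    ∀ (n : ℕ) (x : S),
      ‖(Qiter Pk n f x : ℂ) - ((∫ y, f y ∂μ : ℝ) : ℂ) -
          (α : ℂ) ^ n * ∑ j, (αj j / (α : ℂ)) ^ n * R j (cplx f) x‖
        ≤ M * β n * α ^ n * C

/-- `Σ₁^crit(𝔣)` (complex-valued expression). -/
noncomputable def Sigma1CritC (Pk : Kernel S (S × S)) (μ : Measure S) {J : Type*}
    [Fintype J] (R : J → (S → ℂ) → S → ℂ) (f : ℕ → S → ℝ) : ℂ :=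
  ∑' k : ℕ, ((2 : ℂ) ^ k)⁻¹ *
    ∑ j, ∫ x, P2C Pk (symTensC (R j (cplx (f k))) (RconjApp R j (f k))) x ∂μ

/-- `f*_{k,ℓ} = ∑_j θ_j^{ℓ-k} ℛ_j(f_k) ⊗_sym conj(ℛ_j)(f_ℓ)`. -/
noncomputable def fstar (α : ℝ) {J : Type*} [Fintype J] (αj : J → ℂ)
    (R : J → (S → ℂ) → S → ℂ) (f : ℕ → S → ℝ) (k ℓ : ℕ) : S × S → ℂ :=
  fun yz => ∑ j, (αj j / (α : ℂ)) ^ ((ℓ : ℤ) - (k : ℤ)) *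
    symTensC (R j (cplx (f k))) (RconjApp R j (f ℓ)) yz

/-- `Σ₂^crit(𝔣)` (complex-valued expression); `q.1 = ℓ`, `q.2 = k`. -/
noncomputable def Sigma2CritC (Pk : Kernel S (S × S)) (μ : Measure S) (α : ℝ)
    {J : Type*} [Fintype J] (αj : J → ℂ) (R : J → (S → ℂ) → S → ℂ)
    (f : ℕ → S → ℝ) : ℂ :=
  ∑' q : ℕ × ℕ, if q.1 < q.2 then
    (((2 : ℝ) ^ (-(((q.2 : ℝ) + (q.1 : ℝ)) / 2)) : ℝ) : ℂ) *
      ∫ x, P2C Pk (fstar α αj R f q.2 q.1) x ∂μ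
  else 0

/-- `Σ^crit(𝔣) = Σ₁^crit(𝔣) + 2Σ₂^crit(𝔣)` (its real value). -/
noncomputable def SigmaCrit (Pk : Kernel S (S × S)) (μ : Measure S) (α : ℝ)
    {J : Type*} [Fintype J] (αj : J → ℂ) (R : J → (S → ℂ) → S → ℂ)
    (f : ℕ → S → ℝ) : ℝ :=
  (Sigma1CritC Pk μ R f + 2 * Sigma2CritC Pk μ α αj R f).re

/-- `Σ_𝔾^crit(f)` (critical, single function; its real value). -/
noncomputable def SigmaGcrit (Pk : Kernel S (S × S)) (μ : Measure S) {J : Type*}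
    [Fintype J] (R : J → (S → ℂ) → S → ℂ) (f : S → ℝ) : ℝ :=
  (∑ j, ∫ x, P2C Pk (symTensC (R j (cplx f)) (RconjApp R j f)) x ∂μ).re

/-- `Σ_𝕋^crit(f) = Σ_𝔾^crit(f) + 2Σ_{𝕋,2}^crit(f)` (critical, single function). -/
noncomputable def SigmaTcrit (Pk : Kernel S (S × S)) (μ : Measure S) (α : ℝ)
    {J : Type*} [Fintype J] (αj : J → ℂ) (R : J → (S → ℂ) → S → ℂ) (f : S → ℝ) : ℝ :=
  ((∑ j, ∫ x, P2C Pk (symTensC (R j (cplx f)) (RconjApp R j f)) x ∂μ) +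
      2 * ∑ j, ((Real.sqrt 2 : ℂ) * (αj j / (α : ℂ)) - 1)⁻¹ *
        ∫ x, P2C Pk (symTensC (R j (cplx f)) (RconjApp R j f)) x ∂μ).re

/-!
Chernoff's bound reduces the claim to a bound on `E exp(t M_{𝔾_k}(𝒬ʲ f̃))`. By the
branching property, conditionally on `𝕋_k` the pairs `(X_{i0}, X_{i1})`, `i ∈ 𝔾_k`, are
independent with laws `Pk(X_i, ·)`, and Hoeffding's lemma applied to `φ(X_{i0}) + φ(X_{i1})`
(mean `2 𝒬φ(X_i)`, range `[-2‖φ‖_∞, 2‖φ‖_∞]`) gives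
`E exp(t M_{𝔾_{k+1}}(φ)) ≤ exp(2^{k+1} ‖φ‖_∞² t²) E exp(2t M_{𝔾_k}(𝒬φ))`.
Iterating down to the root with `‖𝒬ʲ f̃‖_∞ ≤ M αʲ ‖f‖_∞`, the Gaussian terms add up to a
geometric series in `2α²`, while the root contributes the bias `2^k M αᵏ ‖f‖_∞ |t|`.
-/

section Tree

lemma mem_Gen {k : ℕ} {u : List Bool} : u ∈ Gen k ↔ u.length = k := by
  constructor
  · rintro hu
    obtain ⟨g, -, rfl⟩ := Finset.mem_image.mp hu
    exact List.length_ofFn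
  · rintro rfl
    exact Finset.mem_image.mpr ⟨u.get, Finset.mem_univ _, List.ofFn_get u⟩

lemma Gen_zero : Gen 0 = {[]} := by
  ext u
  simp [mem_Gen]

lemma card_Gen (k : ℕ) : (Gen k).card = 2 ^ k := by
  rw [Gen, Finset.card_image_of_injective _ List.ofFn_injective]
  simp

lemma Gen_succ (k : ℕ) :
    Gen (k + 1) = (Gen k).biUnion fun i => {i ++ [false], i ++ [true]} := by
  ext u
  simp only [mem_Gen, Finset.mem_biUnion, Finset.mem_insert, Finset.mem_singleton]
  constructor
  · intro h
    have hne : u ≠ [] := List.ne_nil_of_length_eq_add_one h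
    refine ⟨u.dropLast, by simp [h], ?_⟩
    rw [← List.dropLast_append_getLast hne]
    cases u.getLast hne <;> simp
  · rintro ⟨i, hi, rfl | rfl⟩ <;> simp [hi]

lemma sum_Gen_succ {β : Type*} [AddCommMonoid β] (k : ℕ) (F : List Bool → β) :
    ∑ u ∈ Gen (k + 1), F u = ∑ i ∈ Gen k, (F (i ++ [false]) + F (i ++ [true])) := by
  rw [Gen_succ, Finset.sum_biUnion]
  · exact Finset.sum_congr rfl fun i _ => Finset.sum_pair (by simp)
  · intro i _ i' _ hne
    simp only [Function.onFun, Finset.disjoint_insert_left, Finset.disjoint_insert_right,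
      Finset.disjoint_singleton, Finset.mem_insert, Finset.mem_singleton]
    simp [hne, hne.symm]

end Tree

section MarkovOperator

variable (Pk : Kernel S (S × S))

lemma measurable_Qop {φ : S → ℝ} (hφ : Measurable φ) : Measurable (Qop Pk φ) := by
  have h₁ := (hφ.comp measurable_fst).stronglyMeasurable.integral_kernel (κ := Pk)
  have h₂ := (hφ.comp measurable_snd).stronglyMeasurable.integral_kernel (κ := Pk)
  exact (h₁.measurable.add h₂.measurable).div_const 2

lemma abs_Qop_le [IsMarkovKernel Pk] {φ : S → ℝ} {c : ℝ} (hφ : ∀ x, |φ x| ≤ c) (x : S) :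
    |Qop Pk φ x| ≤ c := by
  have h₁ : |∫ yz, φ yz.1 ∂(Pk x)| ≤ c := by
    simpa using norm_integral_le_of_norm_le_const (f := fun yz : S × S => φ yz.1)
      (ae_of_all (Pk x) fun yz => hφ yz.1)
  have h₂ : |∫ yz, φ yz.2 ∂(Pk x)| ≤ c := by
    simpa using norm_integral_le_of_norm_le_const (f := fun yz : S × S => φ yz.2)
      (ae_of_all (Pk x) fun yz => hφ yz.2)
  rw [Qop, abs_div, abs_two]
  linarith [abs_add_le (∫ yz, φ yz.1 ∂(Pk x)) (∫ yz, φ yz.2 ∂(Pk x))]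

lemma Qiter_succ (n : ℕ) (φ : S → ℝ) : Qiter Pk (n + 1) φ = Qop Pk (Qiter Pk n φ) :=
  Function.iterate_succ_apply' _ _ _

lemma measurable_Qiter {φ : S → ℝ} (hφ : Measurable φ) (n : ℕ) :
    Measurable (Qiter Pk n φ) := by
  induction n with
  | zero => exact hφ
  | succ n ih => rw [Qiter_succ]; exact measurable_Qop Pk ih

lemma abs_Qiter_le [IsMarkovKernel Pk] {φ : S → ℝ} {c : ℝ} (hφ : ∀ x, |φ x| ≤ c) (n : ℕ)
    (x : S) : |Qiter Pk n φ x| ≤ c := by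
  induction n generalizing x with
  | zero => exact hφ x
  | succ n ih => rw [Qiter_succ]; exact abs_Qop_le Pk ih x

lemma Qop_sub_const [IsMarkovKernel Pk] {φ : S → ℝ} (hφm : Measurable φ) {c : ℝ}
    (hφ : ∀ x, |φ x| ≤ c) (r : ℝ) :
    Qop Pk (fun x => φ x - r) = fun x => Qop Pk φ x - r := by
  funext x
  have hint : ∀ {π : S × S → S}, Measurable π → Integrable (fun yz => φ (π yz)) (Pk x) :=
    fun hπ => .of_bound (hφm.comp hπ).aestronglyMeasurable c (ae_of_all _ fun yz => hφ _)
  simp only [Qop]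
  rw [integral_sub (hint measurable_fst) (integrable_const r),
    integral_sub (hint measurable_snd) (integrable_const r)]
  simp only [integral_const, probReal_univ, one_smul]
  ring

lemma Qiter_tildeF [IsMarkovKernel Pk] (μ : Measure S) {f : S → ℝ} (hfm : Measurable f) {c : ℝ}
    (hf : ∀ x, |f x| ≤ c) (n : ℕ) :
    Qiter Pk n (tildeF μ f) = fun x => Qiter Pk n f x - ∫ y, f y ∂μ := by
  induction n with
  | zero => rfl
  | succ n ih =>
    rw [Qiter_succ, ih, Qop_sub_const Pk (measurable_Qiter Pk hfm n) (abs_Qiter_le Pk hf n),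
      ← Qiter_succ]

lemma P3_exp_le [IsMarkovKernel Pk] {φ : S → ℝ} (hφm : Measurable φ) {c : ℝ} (hφ : ∀ x, |φ x| ≤ c)
    (t : ℝ) (x : S) :
    P3 Pk (fun p => Real.exp (t * (φ p.2.1 + φ p.2.2))) x
      ≤ Real.exp (2 * t * Qop Pk φ x + 2 * c ^ 2 * t ^ 2) := by
  set ψ : S × S → ℝ := fun yz => φ yz.1 + φ yz.2
  have hψm : Measurable ψ := (hφm.comp measurable_fst).add (hφm.comp measurable_snd)
  have hψ : ∀ yz, ψ yz ∈ Set.Icc (-(2 * c)) (2 * c) := fun yz =>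
    abs_le.mp ((abs_add_le _ _).trans (by linarith [hφ yz.1, hφ yz.2]))
  have hmean : ∫ yz, ψ yz ∂(Pk x) = 2 * Qop Pk φ x := by
    have hint : ∀ {π : S × S → S}, Measurable π → Integrable (fun yz => φ (π yz)) (Pk x) :=
      fun hπ => .of_bound (hφm.comp hπ).aestronglyMeasurable c (ae_of_all _ fun yz => hφ _)
    rw [integral_add (hint measurable_fst) (hint measurable_snd), Qop]
    ring
  have hsub := (hasSubgaussianMGF_of_mem_Icc hψm.aemeasurable (ae_of_all (Pk x) hψ)).mgf_le t
  have hshift := mgf_const_add (X := fun yz => ψ yz - ∫ yz, ψ yz ∂(Pk x)) (μ := Pk x) (t := t)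
    (∫ yz, ψ yz ∂(Pk x))
  simp only [add_sub_cancel] at hshift
  calc P3 Pk (fun p => Real.exp (t * (φ p.2.1 + φ p.2.2))) x = mgf ψ (Pk x) t := rfl
    _ = Real.exp (t * ∫ yz, ψ yz ∂(Pk x)) * mgf (fun yz => ψ yz - ∫ yz, ψ yz ∂(Pk x)) (Pk x) t :=
      hshift
    _ ≤ Real.exp (t * ∫ yz, ψ yz ∂(Pk x)) * Real.exp (4 * c ^ 2 * t ^ 2 / 2) := by
      refine mul_le_mul_of_nonneg_left (hsub.trans_eq ?_) (Real.exp_nonneg _)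
      push_cast
      rw [Real.norm_eq_abs, div_pow, sq_abs]
      ring_nf
    _ = Real.exp (2 * t * Qop Pk φ x + 2 * c ^ 2 * t ^ 2) := by
      rw [hmean, ← Real.exp_add]
      ring_nf

end MarkovOperator

section Chernoff

variable {P : Measure Ω} [IsProbabilityMeasure P] {Z : Ω → ℝ} {N v b δ : ℝ}

/-- Chernoff's bound at `t = δ / (2v)`, the minimiser of the quadratic part of the exponent. -/
lemma measure_ge_le_of_mgf_le (hv : 0 < v) (hδ : 0 < δ)
    (hint : ∀ t, Integrable (fun ω => Real.exp (t * Z ω)) P)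
    (hmgf : ∀ t, mgf Z P t ≤ Real.exp (N * (v * t ^ 2 + b * |t|))) :
    P {ω | N * δ ≤ Z ω} ≤ ENNReal.ofReal (Real.exp (-(δ ^ 2 * N) / (4 * v) * (1 - 2 * b / δ))) := by
  set t := δ / (2 * v) with ht_def
  have ht : 0 < t := by positivity
  rw [← ofReal_measureReal]
  refine ENNReal.ofReal_le_ofReal ((measure_ge_le_exp_mul_mgf _ ht.le (hint t)).trans ?_)
  calc Real.exp (-t * (N * δ)) * mgf Z P t
      ≤ Real.exp (-t * (N * δ)) * Real.exp (N * (v * t ^ 2 + b * |t|)) :=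
        mul_le_mul_of_nonneg_left (hmgf t) (Real.exp_nonneg _)
    _ = Real.exp (-(δ ^ 2 * N) / (4 * v) * (1 - 2 * b / δ)) := by
      rw [← Real.exp_add, abs_of_pos ht]
      congr 1
      rw [ht_def]
      field_simp
      ring

lemma measure_lt_abs_inv_mul_le_of_mgf_le (hN : 0 < N) (hv : 0 ≤ v) (hδ : 0 < δ)
    (hint : ∀ t, Integrable (fun ω => Real.exp (t * Z ω)) P)
    (hmgf : ∀ t, mgf Z P t ≤ Real.exp (N * (v * t ^ 2 + b * |t|))) :
    P {ω | δ < |N⁻¹ * Z ω|} ≤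
      ENNReal.ofReal (2 * Real.exp (-(δ ^ 2 * N) / (4 * v) * (1 - 2 * b / δ))) := by
  rcases hv.eq_or_lt with rfl | hv
  · rw [mul_zero, _root_.div_zero, zero_mul, Real.exp_zero, mul_one, ofReal_ofNat]
    exact prob_le_one.trans (by norm_num)
  have hsub : {ω | δ < |N⁻¹ * Z ω|} ⊆ {ω | N * δ ≤ Z ω} ∪ {ω | N * δ ≤ (-Z) ω} := by
    intro ω (hω : δ < |N⁻¹ * Z ω|)
    rw [abs_mul, abs_inv, abs_of_pos hN, inv_mul_eq_div, lt_div_iff₀ hN] at hω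
    rcases le_abs'.mp (by linarith : N * δ ≤ |Z ω|) with h | h
    · exact Or.inr (show N * δ ≤ -Z ω by linarith)
    · exact Or.inl h
  have hint_neg : ∀ t, Integrable (fun ω => Real.exp (t * (-Z) ω)) P := fun t => by
    simpa only [Pi.neg_apply, mul_neg, neg_mul] using hint (-t)
  have hmgf_neg : ∀ t, mgf (-Z) P t ≤ Real.exp (N * (v * t ^ 2 + b * |t|)) := fun t => by
    simpa only [mgf_neg, neg_sq, abs_neg] using hmgf (-t)
  calc P {ω | δ < |N⁻¹ * Z ω|}
      ≤ P {ω | N * δ ≤ Z ω} + P {ω | N * δ ≤ (-Z) ω} :=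
        (measure_mono hsub).trans (measure_union_le _ _)
    _ ≤ _ := add_le_add (measure_ge_le_of_mgf_le hv hδ hint hmgf)
        (measure_ge_le_of_mgf_le hv hδ hint_neg hmgf_neg)
    _ = _ := by
      rw [← ENNReal.ofReal_add (Real.exp_nonneg _) (Real.exp_nonneg _)]
      ring_nf

end Chernoff

section BifurcatingMarkovChain

variable {P : Measure Ω} {Pk : Kernel S (S × S)} {ν : Measure S} {X : List Bool → Ω → S}

lemma integrable_exp_mul_Mfun [IsFiniteMeasure P] (hXm : ∀ i, Measurable (X i)) {φ : S → ℝ}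
    (hφm : Measurable φ) {c : ℝ} (hφ : ∀ x, |φ x| ≤ c) (A : Finset (List Bool)) (t : ℝ) :
    Integrable (fun ω => Real.exp (t * Mfun X A φ ω)) P := by
  have hM : ∀ ω, |Mfun X A φ ω| ≤ A.card * c := fun ω =>
    (Finset.abs_sum_le_sum_abs _ _).trans
      (by simpa using Finset.sum_le_card_nsmul A (fun u => |φ (X u ω)|) c fun u _ => hφ _)
  exact integrable_exp_mul_of_mem_Icc
    (Finset.measurable_sum _ fun u _ => hφm.comp (hXm u)).aemeasurable
    (ae_of_all _ fun ω => abs_le.mp (hM ω))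

lemma integral_exp_mul_Mfun_Gen_succ [IsProbabilityMeasure P] (hX : IsBMC P Pk ν X)
    {φ : S → ℝ} (hφm : Measurable φ) {c : ℝ} (hφ : ∀ x, |φ x| ≤ c) (k : ℕ) (t : ℝ) :
    ∫ ω, Real.exp (t * Mfun X (Gen (k + 1)) φ ω) ∂P
      = ∫ ω, ∏ i ∈ Gen k, P3 Pk (fun p => Real.exp (t * (φ p.2.1 + φ p.2.2))) (X i ω) ∂P := by
  set G : S × S × S → ℝ := fun p => Real.exp (t * (φ p.2.1 + φ p.2.2))
  have hGm : Measurable G := by fun_prop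
  have hG : ∀ p, |G p| ≤ Real.exp (|t| * (2 * c)) := fun p => by
    rw [abs_of_pos (Real.exp_pos _), Real.exp_le_exp]
    refine (le_abs_self _).trans
      ((abs_mul _ _).trans_le (mul_le_mul_of_nonneg_left ?_ (abs_nonneg t)))
    linarith [abs_add_le (φ p.2.1) (φ p.2.2), hφ p.2.1, hφ p.2.2]
  have hprod : (fun ω => Real.exp (t * Mfun X (Gen (k + 1)) φ ω)) =
      fun ω => ∏ i ∈ Gen k, G (X i ω, X (i ++ [false]) ω, X (i ++ [true]) ω) := by
    funext ω
    rw [Mfun, sum_Gen_succ k fun u => φ (X u ω), Finset.mul_sum, Real.exp_sum]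
  have hle : treeSigma X (TreeUpTo k) ≤ ‹MeasurableSpace Ω› :=
    iSup₂_le fun j _ => (hX.meas j).comap_le
  rw [hprod, ← integral_condExp hle]
  exact integral_congr_ae (hX.branching k (fun _ => G) (fun _ => hGm) fun _ => ⟨_, hG⟩)

lemma integral_exp_mul_Mfun_Gen_succ_le [IsProbabilityMeasure P] [IsMarkovKernel Pk]
    (hX : IsBMC P Pk ν X) {φ : S → ℝ} (hφm : Measurable φ) {c : ℝ} (hφ : ∀ x, |φ x| ≤ c)
    (k : ℕ) (t : ℝ) :
    ∫ ω, Real.exp (t * Mfun X (Gen (k + 1)) φ ω) ∂P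
      ≤ Real.exp (2 ^ k * (2 * c ^ 2 * t ^ 2)) *
        ∫ ω, Real.exp (2 * t * Mfun X (Gen k) (Qop Pk φ) ω) ∂P := by
  have hP3 : ∀ x, 0 ≤ P3 Pk (fun p => Real.exp (t * (φ p.2.1 + φ p.2.2))) x :=
    fun x => integral_nonneg fun _ => (Real.exp_pos _).le
  rw [integral_exp_mul_Mfun_Gen_succ hX hφm hφ, ← integral_const_mul]
  refine integral_mono_of_nonneg (ae_of_all _ fun ω => Finset.prod_nonneg fun i _ => hP3 _)
    ((integrable_exp_mul_Mfun hX.meas (measurable_Qop Pk hφm) (abs_Qop_le Pk hφ) _ _).const_mul _)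
    (ae_of_all _ fun ω => ?_)
  calc ∏ i ∈ Gen k, P3 Pk (fun p => Real.exp (t * (φ p.2.1 + φ p.2.2))) (X i ω)
      ≤ ∏ i ∈ Gen k, Real.exp (2 * t * Qop Pk φ (X i ω) + 2 * c ^ 2 * t ^ 2) :=
        Finset.prod_le_prod (fun i _ => hP3 _) fun i _ => P3_exp_le Pk hφm hφ t _
    _ = _ := by
      dsimp only
      rw [← Real.exp_sum, ← Real.exp_add, Finset.sum_add_distrib, Finset.sum_const, card_Gen,
        Mfun, Finset.mul_sum, nsmul_eq_mul]
      push_cast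
      ring_nf

/-- The invariant `B² + 2α²K ≤ K` makes the Gaussian part of the exponent stable under the
recursion `(k + 1, j, t) ↦ (k, j + 1, 2t)` of `integral_exp_mul_Mfun_Gen_succ_le`. -/
lemma integral_exp_mul_Mfun_Qiter_le [IsProbabilityMeasure P] [IsMarkovKernel Pk]
    (hX : IsBMC P Pk ν X) {g : S → ℝ} (hgm : Measurable g) {B α K : ℝ}
    (hg : ∀ j x, |Qiter Pk j g x| ≤ B * α ^ j) (hK0 : 0 ≤ K) (hK : B ^ 2 + 2 * α ^ 2 * K ≤ K)
    (k j : ℕ) (t : ℝ) :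
    ∫ ω, Real.exp (t * Mfun X (Gen k) (Qiter Pk j g) ω) ∂P
      ≤ Real.exp (2 ^ k * (K * (α ^ j) ^ 2 * t ^ 2 + B * α ^ (j + k) * |t|)) := by
  induction k generalizing j t with
  | zero =>
    simp only [Gen_zero, Mfun, Finset.sum_singleton, pow_zero, one_mul, add_zero]
    refine (integral_mono_of_nonneg (ae_of_all _ fun _ => (Real.exp_pos _).le)
      (integrable_const (Real.exp (K * (α ^ j) ^ 2 * t ^ 2 + B * α ^ j * |t|)))
      (ae_of_all _ fun ω => ?_)).trans_eq (by simp)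
    rw [Real.exp_le_exp]
    have hgj := mul_le_mul_of_nonneg_left (hg j (X [] ω)) (abs_nonneg t)
    have hsq : 0 ≤ K * (α ^ j) ^ 2 * t ^ 2 := by positivity
    nlinarith [le_abs_self (t * Qiter Pk j g (X [] ω)), abs_mul t (Qiter Pk j g (X [] ω))]
  | succ k ih =>
    calc ∫ ω, Real.exp (t * Mfun X (Gen (k + 1)) (Qiter Pk j g) ω) ∂P
        ≤ Real.exp (2 ^ k * (2 * (B * α ^ j) ^ 2 * t ^ 2)) *
            ∫ ω, Real.exp (2 * t * Mfun X (Gen k) (Qiter Pk (j + 1) g) ω) ∂P := by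
          rw [Qiter_succ]
          exact integral_exp_mul_Mfun_Gen_succ_le hX (measurable_Qiter Pk hgm j) (hg j) k t
      _ ≤ Real.exp (2 ^ k * (2 * (B * α ^ j) ^ 2 * t ^ 2)) *
            Real.exp (2 ^ k * (K * (α ^ (j + 1)) ^ 2 * (2 * t) ^ 2 +
              B * α ^ (j + 1 + k) * |2 * t|)) := by
          gcongr
          exact ih (j + 1) (2 * t)
      _ ≤ Real.exp (2 ^ (k + 1) * (K * (α ^ j) ^ 2 * t ^ 2 + B * α ^ (j + (k + 1)) * |t|)) := by
          rw [← Real.exp_add, Real.exp_le_exp, abs_mul, abs_two]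
          have h := mul_le_mul_of_nonneg_left hK
            (by positivity : (0 : ℝ) ≤ 2 ^ (k + 1) * (α ^ j) ^ 2 * t ^ 2)
          linear_combination h

end BifurcatingMarkovChain

theorem statement_6_general {S : Type*} [MeasurableSpace S] {Ω : Type*} [MeasurableSpace Ω]
    (P : Measure Ω) [IsProbabilityMeasure P]
    (Pk : Kernel S (S × S)) [IsMarkovKernel Pk]
    (ν : Measure S)
    (X : List Bool → Ω → S) (hX : IsBMC P Pk ν X)
    (μ : Measure S) (M α : ℝ)
    (hα0 : 0 < α) (hα2 : 2 * α ^ 2 < 1)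
    (hErg : UnifErg Pk μ M α)
    (f : S → ℝ) (hfm : Measurable f) (hfb : ∃ C, ∀ x, |f x| ≤ C)
    (n q : ℕ) (δ : ℝ) (hδ : 0 < δ) :
    P {ω | δ < |((2 : ℝ) ^ (n - q))⁻¹ * Mfun X (Gen (n - q)) (tildeF μ f) ω|} ≤
      ENNReal.ofReal (2 * Real.exp
        (-(δ ^ 2 * 2 ^ (n - q)) /
            (4 * (⨆ x, |f x|) ^ 2 * M ^ 2 * (1 + α) ^ 2 * ∑' m : ℕ, (2 * α ^ 2) ^ m) *
          (1 - 2 * (⨆ x, |f x|) * M * α ^ (n - q) / δ))) := by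
  obtain ⟨C₀, hC₀⟩ := hfb
  set C := ⨆ x, |f x|
  have hC : ∀ x, |f x| ≤ C := fun x => le_ciSup ⟨C₀, by rintro _ ⟨y, rfl⟩; exact hC₀ y⟩ x
  set a := ∑' m : ℕ, (2 * α ^ 2) ^ m
  have ha : a = (1 - 2 * α ^ 2)⁻¹ := tsum_geometric_of_lt_one (by positivity) hα2
  set K := C ^ 2 * M ^ 2 * (1 + α) ^ 2 * a
  have hK0 : 0 ≤ K := mul_nonneg (by positivity) (ha ▸ inv_nonneg.mpr (by linarith))
  have hK : (M * C) ^ 2 + 2 * α ^ 2 * K ≤ K := by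
    have hK' : K * (1 - 2 * α ^ 2) = (M * C) ^ 2 * (1 + α) ^ 2 := by
      rw [mul_assoc, ha, inv_mul_cancel₀ (by linarith)]
      ring
    nlinarith [mul_nonneg (sq_nonneg (M * C)) (by positivity : 0 ≤ 2 * α + α ^ 2)]
  set g := tildeF μ f
  have hgm : Measurable g := hfm.sub measurable_const
  have hg : ∀ j x, |Qiter Pk j g x| ≤ M * C * α ^ j := fun j x => by
    rw [Qiter_tildeF Pk μ hfm hC]
    linarith [hErg f hfm C hC j x]
  have hmgf : ∀ t, mgf (Mfun X (Gen (n - q)) g) P t ≤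
      Real.exp (2 ^ (n - q) * (K * t ^ 2 + M * C * α ^ (n - q) * |t|)) := fun t => by
    have h := integral_exp_mul_Mfun_Qiter_le hX hgm hg hK0 hK (n - q) 0 t
    simp only [pow_zero, one_pow, mul_one, zero_add] at h
    exact h
  have hint := integrable_exp_mul_Mfun (P := P) hX.meas hgm (hg 0) (Gen (n - q))
  convert measure_lt_abs_inv_mul_le_of_mgf_le (by positivity) hK0 hδ hint hmgf using 5
  · simp only [K, mul_assoc]
  · ring

theorem statement_6 {S : Type*} [MeasurableSpace S] {Ω : Type*} [MeasurableSpace Ω]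
    (P : Measure Ω) [IsProbabilityMeasure P]
    (Pk : Kernel S (S × S)) [IsMarkovKernel Pk]
    (ν : Measure S) [IsProbabilityMeasure ν]
    (X : List Bool → Ω → S) (hX : IsBMC P Pk ν X)
    (μ : Measure S) [IsProbabilityMeasure μ] (M α : ℝ) (hM : 0 < M)
    (hα0 : 0 < α) (hα1 : α < 1) (hα2 : 2 * α ^ 2 < 1)
    (hErg : UnifErg Pk μ M α)
    (f : S → ℝ) (hfm : Measurable f) (hfb : ∃ C, ∀ x, |f x| ≤ C)
    (n q : ℕ) (hq : q ≤ n) (δ : ℝ) (hδ : 0 < δ) :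
    P {ω | δ < |((2 : ℝ) ^ (n - q))⁻¹ * Mfun X (Gen (n - q)) (tildeF μ f) ω|} ≤
      ENNReal.ofReal (2 * Real.exp
        (-(δ ^ 2 * 2 ^ (n - q)) /
            (4 * (⨆ x, |f x|) ^ 2 * M ^ 2 * (1 + α) ^ 2 * ∑' m : ℕ, (2 * α ^ 2) ^ m) *
          (1 - 2 * (⨆ x, |f x|) * M * α ^ (n - q) / δ))) :=
  statement_6_general P Pk ν X hX μ M α hα0 hα2 hErg f hfm hfb n q δ hδ

end BMCMDP
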